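/- Let m_k(x)=E[τ_k^x] for integers x with L ≤ x ≤ U, where U−L ≥ 4. Then for every k ≥ 2: m_k(U)=0; m_k(U−1)=1+q·m_{k−1}(U−2); m_k(U−2)=1+p+pq·m_{k−2}(U−2)+q·m_{k−1}(U−3); for every integer x with L+1 ≤ x ≤ U−3, m_k(x)=1+pq·m_{k−2}(x)+p·m_{k−1}(x+2)−pq·m_{k−2}(x+1)+q·m_{k−1}(x−1); and m_k(L)=0. -/

import Mathlib

open MeasureTheory ProbabilityTheory Filter
open scoped ENNReal Classical

noncomputable section

variable {Ω : Type*} [MeasurableSpace Ω]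

/-- The `k`-th step of the ladder chain `L(2,2,p)` built from the driving
sequence `ξ` (indexed from 1): `X₁ = ±1` according to `ξ₁`, and for `k ≥ 2`,
`X_k = -1` if `ξ_k = -1`, `X_k = 2` if `ξ_k = ξ_{k-1} = 1`, and `X_k = 1`
if `ξ_k = 1, ξ_{k-1} = -1`. -/
def ladderX (ξ : ℕ → Ω → ℤ) (k : ℕ) (ω : Ω) : ℤ :=
  if k = 1 then (if ξ 1 ω = 1 then 1 else -1)
  else if ξ k ω = -1 then -1
  else if ξ (k - 1) ω = 1 then 2 else 1

/-- The ladder chain `S_n = X₁ + ⋯ + X_n` (with `S_0 = 0`). -/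
def ladderS (ξ : ℕ → Ω → ℤ) (n : ℕ) (ω : Ω) : ℤ :=
  ∑ k ∈ Finset.Icc 1 n, ladderX ξ k ω

/-- The truncated exit time `τ_k^x`: the least `l ≤ k` with `S_l^x ≤ L` or
`S_l^x ≥ U`, and `k` if there is no such `l`. -/
def ladderTau (ξ : ℕ → Ω → ℤ) (L U x : ℤ) (k : ℕ) (ω : Ω) : ℕ :=
  if ∃ l ≤ k, (x + ladderS ξ l ω ≤ L ∨ U ≤ x + ladderS ξ l ω)
  then sInf {l | l ≤ k ∧ (x + ladderS ξ l ω ≤ L ∨ U ≤ x + ladderS ξ l ω)}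
  else k

/-!
Condition on the first one or two signs of the driving sequence. From an interior `x`, a down-step
restarts the chain at `x - 1` with one step less, an up-step followed by a down-step restarts it at
`x` with two steps less, and two up-steps leave it, one step later, in the state of a chain started
at `x + 2` whose first step is up. The last branch is `m_{k-1}(x + 2)` minus the down-step part of
that mean, which gives the interior equation; near `U` the up-steps exit instead. Since `τ_k^x` is
a function of the first `k` signs, which are i.i.d., every mean is a finite sum over sign patterns,
and conditioning on the first sign is splitting that sum.
-/

section Hitting

variable {α α' β : Type*} {u : ℕ → α → β} {v : ℕ → α' → β} {s : Set β} {ω : α} {ω' : α'}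

lemma hittingBtwn_congr {n m : ℕ} (h : ∀ l ∈ Set.Icc n m, u l ω = v l ω') :
    hittingBtwn u s n m ω = hittingBtwn v s n m ω' := by
  have hex : (∃ j ∈ Set.Icc n m, u j ω ∈ s) ↔ ∃ j ∈ Set.Icc n m, v j ω' ∈ s :=
    exists_congr fun j => and_congr_right fun hj => by rw [h j hj]
  have hset : Set.Icc n m ∩ {i | u i ω ∈ s} = Set.Icc n m ∩ {i | v i ω' ∈ s} := by
    ext i
    simp +contextual [h i]
  simp only [hittingBtwn, hex, hset]

lemma hittingBtwn_zero_of_mem {m : ℕ} (h : u 0 ω ∈ s) : hittingBtwn u s 0 m ω = 0 :=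
  Nat.le_zero.mp (hittingBtwn_le_of_mem le_rfl (Nat.zero_le m) h)

lemma hittingBtwn_zero_succ (h : u 0 ω ∉ s) (k : ℕ) :
    hittingBtwn u s 0 (k + 1) ω = hittingBtwn (fun l => u (l + 1)) s 0 k ω + 1 := by
  refine eq_of_forall_gt_iff fun i => ?_
  rcases i with _ | i
  · simp
  rw [Nat.add_lt_add_iff_right]
  rcases le_or_gt i k with hik | hki
  · rw [hittingBtwn_lt_iff _ (by omega), hittingBtwn_lt_iff _ hik]
    constructor
    · rintro ⟨_ | j, hj, hjs⟩
      · exact absurd hjs h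
      · exact ⟨j, by simp at hj ⊢; omega, hjs⟩
    · rintro ⟨j, hj, hjs⟩
      exact ⟨j + 1, by simp at hj ⊢; omega, hjs⟩
  · exact iff_of_true ((hittingBtwn_le ω).trans_lt (by omega))
      ((hittingBtwn_le ω).trans_lt hki)

end Hitting

section LadderChain

variable {α α' : Type*} {ξ : ℕ → α → ℤ} {ζ : ℕ → α' → ℤ} {L U x y : ℤ} {k : ℕ}
  {ω : α} {ω' : α'}

lemma ladderS_zero (ξ : ℕ → α → ℤ) (ω : α) : ladderS ξ 0 ω = 0 := by
  simp [ladderS]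

lemma ladderS_succ (ξ : ℕ → α → ℤ) (l : ℕ) (ω : α) :
    ladderS ξ (l + 1) ω = ladderS ξ l ω + ladderX ξ (l + 1) ω :=
  Finset.sum_Icc_succ_top (by omega) _

lemma ladderTau_eq_hittingBtwn (ξ : ℕ → α → ℤ) (L U x : ℤ) (k : ℕ) (ω : α) :
    ladderTau ξ L U x k ω
      = hittingBtwn (fun l ω => x + ladderS ξ l ω) {z | z ≤ L ∨ U ≤ z} 0 k ω := by
  have hset : {l | l ≤ k ∧ (x + ladderS ξ l ω ≤ L ∨ U ≤ x + ladderS ξ l ω)}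
      = Set.Icc 0 k ∩ {l | x + ladderS ξ l ω ∈ {z | z ≤ L ∨ U ≤ z}} := by
    ext l
    simp
  simp [ladderTau, hittingBtwn, hset]

lemma ladderTau_eq_zero (h : x ≤ L ∨ U ≤ x) : ladderTau ξ L U x k ω = 0 := by
  rw [ladderTau_eq_hittingBtwn]
  exact hittingBtwn_zero_of_mem (by simpa [ladderS_zero] using h)

lemma ladderTau_succ (hL : L < x) (hU : x < U) :
    ladderTau ξ L U x (k + 1) ω
      = hittingBtwn (fun l ω => x + ladderS ξ (l + 1) ω) {z | z ≤ L ∨ U ≤ z} 0 k ω + 1 := by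
  rw [ladderTau_eq_hittingBtwn, hittingBtwn_zero_succ (by simp [ladderS_zero]; omega)]

lemma ladderTau_succ_of_shift (hL : L < x) (hU : x < U)
    (h : ∀ l, x + ladderS ξ (l + 1) ω = y + ladderS ζ l ω') :
    ladderTau ξ L U x (k + 1) ω = ladderTau ζ L U y k ω' + 1 := by
  rw [ladderTau_succ hL hU, ladderTau_eq_hittingBtwn]
  exact congrArg (· + 1) (hittingBtwn_congr fun l _ => h l)

end LadderChain

abbrev BoolPath := ℕ → Bool

namespace BoolPath

/-- Booleans encode the signs (`true` for `+1`), so every path is a valid driving sequence. -/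
def driver : ℕ → BoolPath → ℤ := fun n β => if β n then 1 else -1

/-- Prepends the sign `c` at index `1`, where the chain starts reading; index `0` is never read. -/
def cons (c : Bool) (β : BoolPath) : BoolPath := fun n => if n = 1 then c else β (n - 1)

variable {c : Bool} {β : BoolPath}

@[simp] lemma cons_one : cons c β 1 = c := rfl

lemma ladderX_one (β : BoolPath) : ladderX driver 1 β = if β 1 then 1 else -1 := by
  cases h : β 1 <;> simp [ladderX, driver, h]

lemma ladderX_two_cons (c : Bool) (β : BoolPath) :
    ladderX driver 2 (cons c β) = if β 1 then (if c then 2 else 1) else -1 := by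
  cases c <;> cases h : β 1 <;> simp [ladderX, driver, cons, h]

lemma ladderX_cons {j : ℕ} (hj : 2 ≤ j) (c : Bool) (β : BoolPath) :
    ladderX driver (j + 1) (cons c β) = ladderX driver j β := by
  obtain ⟨i, rfl⟩ : ∃ i, j = i + 2 := ⟨j - 2, by omega⟩
  simp [ladderX, driver, cons]

lemma ladderS_cons_add_two (c : Bool) (β : BoolPath) (l : ℕ) :
    ladderS driver (l + 2) (cons c β)
      = ladderS driver (l + 1) β + (ladderS driver 2 (cons c β) - ladderS driver 1 β) := by
  induction l with
  | zero => ring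
  | succ l ih =>
    rw [ladderS_succ, ih, ladderS_succ driver (l + 1), ladderX_cons (by omega)]
    ring

lemma ladderS_one (β : BoolPath) : ladderS driver 1 β = if β 1 then 1 else -1 := by
  rw [ladderS_succ, ladderS_zero, zero_add, ladderX_one]

lemma ladderS_two_cons (c : Bool) (β : BoolPath) :
    ladderS driver 2 (cons c β)
      = (if c then 1 else -1) + if β 1 then (if c then 2 else 1) else -1 := by
  rw [ladderS_succ, ladderS_one, ladderX_two_cons, cons_one]

lemma ladderS_cons_false (β : BoolPath) (l : ℕ) :
    ladderS driver (l + 1) (cons false β) = ladderS driver l β - 1 := by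
  rcases l with _ | l
  · simp [ladderS_one, ladderS_zero]
  · rw [ladderS_cons_add_two, ladderS_two_cons, ladderS_one]
    cases β 1 <;> simp [sub_eq_add_neg]

lemma ladderS_cons_true_of_false (hβ : β 1 = false) (l : ℕ) :
    ladderS driver (l + 1) (cons true β) = ladderS driver l β + 1 := by
  rcases l with _ | l
  · simp [ladderS_one, ladderS_zero]
  · rw [ladderS_cons_add_two, ladderS_two_cons, ladderS_one, hβ]
    simp

lemma ladderS_cons_true_of_true (hβ : β 1 = true) (l : ℕ) :
    ladderS driver (l + 2) (cons true β) = ladderS driver (l + 1) β + 2 := by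
  rw [ladderS_cons_add_two, ladderS_two_cons, ladderS_one, hβ]
  norm_num

section ExitTime

variable {L U x : ℤ} {k : ℕ}

lemma ladderTau_cons_false (hL : L < x) (hU : x < U) :
    ladderTau driver L U x (k + 1) (cons false β) = ladderTau driver L U (x - 1) k β + 1 :=
  ladderTau_succ_of_shift hL hU fun l => by rw [ladderS_cons_false]; ring

lemma ladderTau_cons_true_of_false (hL : L < x) (hU : x < U) (hβ : β 1 = false) :
    ladderTau driver L U x (k + 1) (cons true β) = ladderTau driver L U (x + 1) k β + 1 :=
  ladderTau_succ_of_shift hL hU fun l => by rw [ladderS_cons_true_of_false hβ]; ring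

/-- Two up-steps from `x` reach `x + 3` with the last step up, exactly as an up-step from `x + 2`
after an up-step does. -/
lemma ladderTau_cons_true_of_true (hL : L < x) (hU : x + 2 < U) (hβ : β 1 = true) :
    ladderTau driver L U x (k + 2) (cons true β)
      = ladderTau driver L U (x + 2) (k + 1) β + 1 := by
  rw [ladderTau_succ hL (by omega), ladderTau_succ (by omega) hU,
    hittingBtwn_zero_succ (by simp [ladderS_one]; omega)]
  congr 1
  exact congrArg (· + 1) (hittingBtwn_congr fun l _ => by
    simp only [ladderS_cons_true_of_true hβ]; ring)

lemma ladderTau_cons_true_of_le (hL : L < x) (hU : x < U) (hxU : U ≤ x + 1) :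
    ladderTau driver L U x (k + 1) (cons true β) = 1 := by
  rw [ladderTau_succ hL hU, hittingBtwn_zero_of_mem (by simp [ladderS_one]; omega)]

lemma ladderTau_cons_true_cons_true_of_le (hL : L < x) (hU : x + 1 < U) (hxU : U ≤ x + 3) :
    ladderTau driver L U x (k + 2) (cons true (cons true β)) = 2 := by
  rw [ladderTau_succ hL (by omega), hittingBtwn_zero_succ (by simp [ladderS_one]; omega),
    hittingBtwn_zero_of_mem (by simp [ladderS_two_cons]; omega)]

lemma dependsOn_ladderTau (L U x : ℤ) (k : ℕ) :
    DependsOn (ladderTau driver L U x k) (Set.Icc 1 k) := by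
  intro β β' h
  have hX : ∀ j ∈ Finset.Icc 1 k, ladderX driver j β = ladderX driver j β' := by
    intro j hj
    rw [Finset.mem_Icc] at hj
    rcases eq_or_ne j 1 with rfl | hj1
    · simp [ladderX, driver, h 1 ⟨le_rfl, hj.2⟩]
    · simp [ladderX, driver, hj1, h j hj, h (j - 1) ⟨by omega, by omega⟩]
  rw [ladderTau_eq_hittingBtwn, ladderTau_eq_hittingBtwn]
  refine hittingBtwn_congr fun l hl =>
    congrArg (x + ·) (Finset.sum_congr rfl fun j hj => hX j ?_)
  simp only [Finset.mem_Icc, Set.mem_Icc] at hj hl ⊢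
  omega

lemma ladderTau_eq_ladderTau_driver {α : Type*} {ξ : ℕ → α → ℤ} {ω : α}
    (hω : ∀ n, ξ n ω = 1 ∨ ξ n ω = -1) (L U x : ℤ) (k : ℕ) :
    ladderTau ξ L U x k ω = ladderTau driver L U x k (fun n => decide (ξ n ω = 1)) := by
  have hξ : ∀ n, driver n (fun n => decide (ξ n ω = 1)) = ξ n ω := fun n => by
    rcases hω n with h | h <;> simp [driver, h]
  have hS : ∀ l, ladderS ξ l ω = ladderS driver l fun n => decide (ξ n ω = 1) :=
    fun l => Finset.sum_congr rfl fun j _ => by simp only [ladderX, hξ]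
  rw [ladderTau_eq_hittingBtwn, ladderTau_eq_hittingBtwn]
  exact hittingBtwn_congr fun l _ => by rw [hS]

end ExitTime

def ofFin {m : ℕ} (b : Fin m → Bool) : BoolPath :=
  fun n => if h : 1 ≤ n ∧ n ≤ m then b ⟨n - 1, by omega⟩ else true

lemma ofFin_cons {m : ℕ} (c : Bool) (b : Fin m → Bool) :
    ofFin (Fin.cons c b : Fin (m + 1) → Bool) = cons c (ofFin b) := by
  funext n
  rcases n with _ | _ | n
  · simp [ofFin, cons]
  · simp [ofFin, cons]
  · by_cases hn : n + 1 ≤ m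
    · simp only [ofFin, cons, dif_pos (show 1 ≤ n + 2 ∧ n + 2 ≤ m + 1 by omega)]
      rw [if_neg (by omega), dif_pos (by omega)]
      exact Fin.cons_succ (α := fun _ => Bool) c b ⟨n, hn⟩
    · simp [ofFin, cons, hn]

def mean (p q : ℝ) (m : ℕ) (F : BoolPath → ℝ) : ℝ :=
  ∑ b : Fin m → Bool, (∏ i, if b i then p else q) * F (ofFin b)

variable {p q : ℝ}

lemma mean_succ (m : ℕ) (F : BoolPath → ℝ) :
    mean p q (m + 1) F
      = p * mean p q m (fun β => F (cons true β)) + q * mean p q m (fun β => F (cons false β)) := by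
  rw [mean, ← (Fin.consEquiv fun _ => Bool).sum_comp, Fintype.sum_prod_type, Fintype.sum_bool,
    mean, mean, Finset.mul_sum, Finset.mul_sum]
  simp [Fin.consEquiv, Fin.prod_univ_succ, ofFin_cons, mul_assoc]

lemma mean_add (m : ℕ) (F G : BoolPath → ℝ) :
    mean p q m (fun β => F β + G β) = mean p q m F + mean p q m G := by
  simp only [mean, mul_add, Finset.sum_add_distrib]

lemma mean_const (hpq : p + q = 1) (m : ℕ) (c : ℝ) : mean p q m (fun _ => c) = c := by
  induction m with
  | zero => simp [mean]
  | succ m ih => rw [mean_succ, ih, ← add_mul, hpq, one_mul]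

lemma mean_add_const (hpq : p + q = 1) (m : ℕ) (F : BoolPath → ℝ) (c : ℝ) :
    mean p q m (fun β => F β + c) = mean p q m F + c := by
  rw [mean_add, mean_const hpq]

def meanExitTime (p q : ℝ) (L U x : ℤ) (k : ℕ) : ℝ :=
  mean p q k fun β => (ladderTau driver L U x k β : ℝ)

section MeanExitTime

variable {L U x : ℤ}

lemma mean_ladderTau_cons_false (hpq : p + q = 1) (hL : L < x) (hU : x < U) (j : ℕ) :
    mean p q j (fun β => (ladderTau driver L U x (j + 1) (cons false β) : ℝ))
      = meanExitTime p q L U (x - 1) j + 1 := by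
  simp_rw [ladderTau_cons_false hL hU, Nat.cast_add, Nat.cast_one]
  exact mean_add_const hpq _ _ _

lemma mean_ladderTau_cons_true_cons_false (hpq : p + q = 1) (hL : L < x) (hU : x + 1 < U)
    (j : ℕ) :
    mean p q j (fun β => (ladderTau driver L U x (j + 2) (cons true (cons false β)) : ℝ))
      = meanExitTime p q L U x j + 2 := by
  simp_rw [ladderTau_cons_true_of_false hL (by omega : x < U) cons_one,
    ladderTau_cons_false (by omega : L < x + 1) hU, add_sub_cancel_right, Nat.cast_add,
    Nat.cast_one, add_assoc, one_add_one_eq_two]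
  exact mean_add_const hpq _ _ _

lemma meanExitTime_sub_one (hpq : p + q = 1) (hLU : L + 2 ≤ U) (n : ℕ) :
    meanExitTime p q L U (U - 1) (n + 2) = 1 + q * meanExitTime p q L U (U - 2) (n + 1) := by
  have hup :
      mean p q (n + 1) (fun β => (ladderTau driver L U (U - 1) (n + 2) (cons true β) : ℝ)) = 1 := by
    simp_rw [ladderTau_cons_true_of_le (by omega : L < U - 1) (by omega : U - 1 < U) (by omega),
      Nat.cast_one]
    exact mean_const hpq _ _
  rw [meanExitTime, mean_succ, hup, mean_ladderTau_cons_false hpq (by omega) (by omega),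
    show U - 1 - 1 = U - 2 by ring]
  linear_combination hpq

lemma meanExitTime_sub_two (hpq : p + q = 1) (hLU : L + 3 ≤ U) (n : ℕ) :
    meanExitTime p q L U (U - 2) (n + 2)
      = 1 + p + p * q * meanExitTime p q L U (U - 2) n
        + q * meanExitTime p q L U (U - 3) (n + 1) := by
  have hupup : mean p q n
      (fun β => (ladderTau driver L U (U - 2) (n + 2) (cons true (cons true β)) : ℝ)) = 2 := by
    simp_rw [ladderTau_cons_true_cons_true_of_le (by omega : L < U - 2)
      (by omega : U - 2 + 1 < U) (by omega), Nat.cast_ofNat]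
    exact mean_const hpq _ _
  rw [meanExitTime, mean_succ, mean_succ, hupup,
    mean_ladderTau_cons_true_cons_false hpq (by omega) (by omega),
    mean_ladderTau_cons_false hpq (by omega) (by omega), show U - 2 - 1 = U - 3 by ring]
  linear_combination (2 * p + 1) * hpq

lemma meanExitTime_of_lt_of_add_three_le (hpq : p + q = 1) (hL : L < x) (hU : x + 3 ≤ U)
    (n : ℕ) :
    meanExitTime p q L U x (n + 2)
      = 1 + p * q * meanExitTime p q L U x n + p * meanExitTime p q L U (x + 2) (n + 1)
        - p * q * meanExitTime p q L U (x + 1) n + q * meanExitTime p q L U (x - 1) (n + 1) := by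
  set A := mean p q n fun β => (ladderTau driver L U (x + 2) (n + 1) (cons true β) : ℝ)
  have hupup : mean p q n
      (fun β => (ladderTau driver L U x (n + 2) (cons true (cons true β)) : ℝ)) = A + 1 := by
    simp_rw [ladderTau_cons_true_of_true hL (by omega : x + 2 < U) cons_one, Nat.cast_add,
      Nat.cast_one]
    exact mean_add_const hpq _ _ _
  have hx2 : meanExitTime p q L U (x + 2) (n + 1)
      = p * A + q * (meanExitTime p q L U (x + 1) n + 1) := by
    rw [meanExitTime, mean_succ, mean_ladderTau_cons_false hpq (by omega) (by omega),
      show x + 2 - 1 = x + 1 by ring]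
  rw [meanExitTime, mean_succ, mean_succ, hupup,
    mean_ladderTau_cons_true_cons_false hpq hL (by omega),
    mean_ladderTau_cons_false hpq hL (by omega), hx2]
  linear_combination (p + 1) * hpq

end MeanExitTime

end BoolPath

section Bernoulli

variable {P : Measure Ω} [IsProbabilityMeasure P] {ξ : ℕ → Ω → ℤ} {p q : ℝ}

lemma measureReal_decide_eq (hp : 0 ≤ p) (hq : q = 1 - p) (hmeas : ∀ n, Measurable (ξ n))
    (hprob : ∀ n, 1 ≤ n → P {ω | ξ n ω = 1} = ENNReal.ofReal p) {n : ℕ} (hn : 1 ≤ n)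
    (c : Bool) : P.real {ω | decide (ξ n ω = 1) = c} = if c then p else q := by
  have h1 : P.real {ω | ξ n ω = 1} = p := by
    rw [measureReal_def, hprob n hn, ENNReal.toReal_ofReal hp]
  cases c
  · have hcompl : {ω | decide (ξ n ω = 1) = false} = {ω | ξ n ω = 1}ᶜ := by
      ext
      simp
    rw [hcompl, probReal_compl_eq_one_sub (measurableSet_eq_fun (hmeas n) measurable_const), h1,
      hq]
    simp
  · simpa using h1

lemma measureReal_forall_decide_eq (hp : 0 ≤ p) (hq : q = 1 - p) (hmeas : ∀ n, Measurable (ξ n))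
    (hindep : iIndepFun ξ P) (hprob : ∀ n, 1 ≤ n → P {ω | ξ n ω = 1} = ENNReal.ofReal p)
    {m : ℕ} (b : Fin m → Bool) :
    P.real {ω | ∀ i : Fin m, decide (ξ (i + 1) ω = 1) = b i} = ∏ i, if b i then p else q := by
  have hind : iIndepFun (fun i : Fin m => ξ (i + 1)) P :=
    hindep.precomp fun i j h => Fin.ext (Nat.succ_injective h)
  have hinter : {ω | ∀ i : Fin m, decide (ξ (i + 1) ω = 1) = b i}
      = ⋂ i : Fin m, ξ (i + 1) ⁻¹' {z | decide (z = 1) = b i} := by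
    ext
    simp
  rw [hinter, measureReal_def,
    hind.meas_iInter fun i => ⟨_, MeasurableSet.of_discrete, rfl⟩, ENNReal.toReal_prod]
  exact Finset.prod_congr rfl fun i _ =>
    measureReal_decide_eq hp hq hmeas hprob (Nat.le_add_left 1 i) (b i)

theorem integral_eq_mean (hp : 0 ≤ p) (hq : q = 1 - p) (hmeas : ∀ n, Measurable (ξ n))
    (hindep : iIndepFun ξ P) (hprob : ∀ n, 1 ≤ n → P {ω | ξ n ω = 1} = ENNReal.ofReal p)
    {m : ℕ} {F : BoolPath → ℝ} (hF : DependsOn F (Set.Icc 1 m)) :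
    ∫ ω, F (fun n => decide (ξ n ω = 1)) ∂P = BoolPath.mean p q m F := by
  set V : Ω → Fin m → Bool := fun ω i => decide (ξ (i + 1) ω = 1)
  have hV : Measurable V := measurable_pi_lambda _ fun i =>
    (Measurable.of_discrete (f := fun z : ℤ => decide (z = 1))).comp (hmeas _)
  have hFV : ∀ ω, F (fun n => decide (ξ n ω = 1)) = F (BoolPath.ofFin (V ω)) := by
    refine fun ω => hF fun n hn => ?_
    rw [Set.mem_Icc] at hn
    simp [BoolPath.ofFin, V, hn, Nat.sub_add_cancel hn.1]
  calc ∫ ω, F (fun n => decide (ξ n ω = 1)) ∂P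
      = ∫ ω, F (BoolPath.ofFin (V ω)) ∂P := by simp_rw [hFV]
    _ = ∫ b, F (BoolPath.ofFin b) ∂(P.map V) :=
      (integral_map (f := fun b => F (BoolPath.ofFin b)) hV.aemeasurable
        Measurable.of_discrete.aestronglyMeasurable).symm
    _ = ∑ b, (P.map V).real {b} • F (BoolPath.ofFin b) := integral_fintype .of_finite
    _ = BoolPath.mean p q m F := by
      refine Finset.sum_congr rfl fun b _ => ?_
      rw [map_measureReal_apply hV (measurableSet_singleton b), smul_eq_mul]
      congr 1
      convert measureReal_forall_decide_eq hp hq hmeas hindep hprob b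
      ext ω
      simp [V, funext_iff]

end Bernoulli

theorem ladder_mk_rec_general (p q : ℝ) (hp0 : 0 < p) (hq : q = 1 - p)
    (P : Measure Ω) [IsProbabilityMeasure P]
    (ξ : ℕ → Ω → ℤ) (hmeas : ∀ n, Measurable (ξ n))
    (hindep : iIndepFun ξ P)
    (hval : ∀ n ω, ξ n ω = 1 ∨ ξ n ω = -1)
    (hprob : ∀ n, 1 ≤ n → P {ω | ξ n ω = 1} = ENNReal.ofReal p)
    (L U : ℤ) (hLU : U - L ≥ 4) (k : ℕ) (hk : 2 ≤ k) :
    (∫ ω, (ladderTau ξ L U U k ω : ℝ) ∂P) = 0 ∧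
    (∫ ω, (ladderTau ξ L U (U - 1) k ω : ℝ) ∂P)
      = 1 + q * (∫ ω, (ladderTau ξ L U (U - 2) (k - 1) ω : ℝ) ∂P) ∧
    (∫ ω, (ladderTau ξ L U (U - 2) k ω : ℝ) ∂P)
      = 1 + p + p * q * (∫ ω, (ladderTau ξ L U (U - 2) (k - 2) ω : ℝ) ∂P)
        + q * (∫ ω, (ladderTau ξ L U (U - 3) (k - 1) ω : ℝ) ∂P) ∧
    (∀ x : ℤ, L + 1 ≤ x → x ≤ U - 3 →
      (∫ ω, (ladderTau ξ L U x k ω : ℝ) ∂P)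
        = 1 + p * q * (∫ ω, (ladderTau ξ L U x (k - 2) ω : ℝ) ∂P)
          + p * (∫ ω, (ladderTau ξ L U (x + 2) (k - 1) ω : ℝ) ∂P)
          - p * q * (∫ ω, (ladderTau ξ L U (x + 1) (k - 2) ω : ℝ) ∂P)
          + q * (∫ ω, (ladderTau ξ L U (x - 1) (k - 1) ω : ℝ) ∂P)) ∧
    (∫ ω, (ladderTau ξ L U L k ω : ℝ) ∂P) = 0 := by
  obtain ⟨n, rfl⟩ : ∃ n, k = n + 2 := ⟨k - 2, by omega⟩
  have hpq : p + q = 1 := by rw [hq]; ring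
  have hmean :
      ∀ x j, ∫ ω, (ladderTau ξ L U x j ω : ℝ) ∂P = BoolPath.meanExitTime p q L U x j := by
    intro x j
    simp_rw [fun ω => BoolPath.ladderTau_eq_ladderTau_driver (hval · ω) L U x j]
    exact integral_eq_mean hp0.le hq hmeas hindep hprob
      fun β β' h => congrArg Nat.cast (BoolPath.dependsOn_ladderTau L U x j h)
  have hexit : ∀ x, x ≤ L ∨ U ≤ x → ∫ ω, (ladderTau ξ L U x (n + 2) ω : ℝ) ∂P = 0 := by
    intro x hx
    simp [ladderTau_eq_zero hx]
  simp only [show n + 2 - 1 = n + 1 by omega, show n + 2 - 2 = n by omega, hmean] at hexit ⊢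
  exact ⟨hexit U (Or.inr le_rfl), BoolPath.meanExitTime_sub_one hpq (by omega) n,
    BoolPath.meanExitTime_sub_two hpq (by omega) n,
    fun x hxL hxU => BoolPath.meanExitTime_of_lt_of_add_three_le hpq (by omega) (by omega) n,
    hexit L (Or.inl le_rfl)⟩

/-- The truncated mean durations `m_k(x) = E[τ_k^x]` satisfy
the linear difference system (23) of the paper, for every `k ≥ 2`. -/
theorem ladder_mk_rec (p q : ℝ) (hp0 : 0 < p) (hp1 : p < 1) (hq : q = 1 - p)
    (P : Measure Ω) [IsProbabilityMeasure P]
    (ξ : ℕ → Ω → ℤ) (hmeas : ∀ n, Measurable (ξ n))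
    (hindep : iIndepFun ξ P)
    (hval : ∀ n ω, ξ n ω = 1 ∨ ξ n ω = -1)
    (hprob : ∀ n, 1 ≤ n → P {ω | ξ n ω = 1} = ENNReal.ofReal p)
    (L U : ℤ) (hLU : U - L ≥ 4) (k : ℕ) (hk : 2 ≤ k) :
    (∫ ω, (ladderTau ξ L U U k ω : ℝ) ∂P) = 0 ∧
    (∫ ω, (ladderTau ξ L U (U - 1) k ω : ℝ) ∂P)
      = 1 + q * (∫ ω, (ladderTau ξ L U (U - 2) (k - 1) ω : ℝ) ∂P) ∧
    (∫ ω, (ladderTau ξ L U (U - 2) k ω : ℝ) ∂P)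
      = 1 + p + p * q * (∫ ω, (ladderTau ξ L U (U - 2) (k - 2) ω : ℝ) ∂P)
        + q * (∫ ω, (ladderTau ξ L U (U - 3) (k - 1) ω : ℝ) ∂P) ∧
    (∀ x : ℤ, L + 1 ≤ x → x ≤ U - 3 →
      (∫ ω, (ladderTau ξ L U x k ω : ℝ) ∂P)
        = 1 + p * q * (∫ ω, (ladderTau ξ L U x (k - 2) ω : ℝ) ∂P)
          + p * (∫ ω, (ladderTau ξ L U (x + 2) (k - 1) ω : ℝ) ∂P)
          - p * q * (∫ ω, (ladderTau ξ L U (x + 1) (k - 2) ω : ℝ) ∂P)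
          + q * (∫ ω, (ladderTau ξ L U (x - 1) (k - 1) ω : ℝ) ∂P)) ∧
    (∫ ω, (ladderTau ξ L U L k ω : ℝ) ∂P) = 0 :=
  ladder_mk_rec_general p q hp0 hq P ξ hmeas hindep hval hprob L U hLU k hk
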